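/- arXiv:2106.00046 — 2 statements merged into one kernel-verified Lean document; each statement's English description precedes it below -/
import Mathlib

section
/- Let M be a loopless matroid on E, m ≥ 1, and Q = Q_m(M) with tip a. If (Y_0, Y_1, …, Y_{k+1}) is a flag of Q (k = r(M)) and Y_{j-1} is a flat not containing a, then either (i) Y_j = cl_Q(Y_{j-1} ∪ {a}), or (ii) Y_j - E = Y_{j-1} - E and r(Y_j ∩ E) = r(Y_{j-1} ∩ E) + 1, or (iii) Y_j = Y_{j-1} ∪ {x} for some x ∈ T with p(x) ∉ cl_M(p(Y_{j-1})), and these three cases are mutually exclusive. -/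
open Set Matroid

namespace ConePaper

variable {α : Type*}

/-- The rank of a set in a matroid: the supremum of sizes of independent subsets. -/
noncomputable def rk (M : Matroid α) (X : Set α) : ℕ :=
  sSup {n : ℕ | ∃ I, M.Indep I ∧ I ⊆ X ∧ I.ncard = n}

/-- A loopless matroid: every singleton of the ground set is independent. -/
def Loopless (M : Matroid α) : Prop := ∀ e ∈ M.E, M.Indep {e}

/-- A coloop: an element of the ground set lying in every base. -/
def IsColoop (M : Matroid α) (e : α) : Prop := e ∈ M.E ∧ ∀ B, M.IsBase B → e ∈ B

/-- A circuit: a minimal dependent set. -/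
def IsCircuit (M : Matroid α) (C : Set α) : Prop :=
  C ⊆ M.E ∧ ¬ M.Indep C ∧ ∀ x ∈ C, M.Indep (C \ {x})

/-- A cyclic flat: a flat whose restriction has no coloops. -/
def CyclicFlat (M : Matroid α) (F : Set α) : Prop :=
  M.IsFlat F ∧ ∀ e ∈ F, ¬ IsColoop (M ↾ F) e

/-- Deletion of a set from a matroid. -/
def mdel (M : Matroid α) (X : Set α) : Matroid α := M ↾ (M.E \ X)

/-- The cone `q(S) = S ∪ {a} ∪ ⋃_{e ∈ S} T e`. -/
def cone (T : α → Set α) (a : α) (S : Set α) : Set α := S ∪ {a} ∪ ⋃ e ∈ S, T e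

/-- The projection `p(S) = (S ∩ E) ∪ {e ∈ E : S ∩ T e ≠ ∅}`. -/
def proj (E : Set α) (T : α → Set α) (S : Set α) : Set α :=
  (S ∩ E) ∪ {e ∈ E | (S ∩ T e).Nonempty}

/-- `FreeCone M Q T a m` says that `Q` is the free `m`-cone of the loopless
matroid `M`, with extra points `T e` (of size `m`) for `e ∈ M.E` and tip `a`:
its cyclic flats are those of `M` (with the same rank) together with the cones
of nonempty flats of `M` (with rank one greater). -/
structure FreeCone (M Q : Matroid α) (T : α → Set α) (a : α) (m : ℕ) : Prop where
  hm : 1 ≤ m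
  hMfin : M.E.Finite
  hloopless : Loopless M
  hTfin : ∀ e ∈ M.E, (T e).Finite
  hTcard : ∀ e ∈ M.E, (T e).ncard = m
  hTdisjE : ∀ e ∈ M.E, Disjoint (T e) M.E
  hTdisj : ∀ e ∈ M.E, ∀ f ∈ M.E, e ≠ f → Disjoint (T e) (T f)
  ha : a ∉ M.E ∪ ⋃ e ∈ M.E, T e
  hQE : Q.E = M.E ∪ (⋃ e ∈ M.E, T e) ∪ {a}
  hcyclic : ∀ F, CyclicFlat Q F ↔
      (CyclicFlat M F ∨ ∃ F', M.IsFlat F' ∧ F'.Nonempty ∧ F = cone T a F')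
  hrank1 : ∀ F, CyclicFlat M F → rk Q F = rk M F
  hrank2 : ∀ F', M.IsFlat F' → F'.Nonempty → rk Q (cone T a F') = rk M F' + 1

/-- A flag of a rank-`k` matroid: a chain of flats, one of each rank `0,…,k`. -/
def IsFlag (N : Matroid α) (k : ℕ) (X : ℕ → Set α) : Prop :=
  (∀ i ≤ k, N.IsFlat (X i) ∧ rk N (X i) = i) ∧ ∀ i < k, X i ⊂ X (i + 1)

section RankBasics

variable {N : Matroid α} {X Y I C F : Set α} {x : α}

lemma rk_bddAbove (hE : N.E.Finite) (X : Set α) :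
    BddAbove {n : ℕ | ∃ I, N.Indep I ∧ I ⊆ X ∧ I.ncard = n} := by
  refine ⟨N.E.ncard, ?_⟩
  rintro n ⟨I, hI, -, rfl⟩
  exact Set.ncard_le_ncard hI.subset_ground hE

lemma rk_nonempty (X : Set α) :
    Set.Nonempty {n : ℕ | ∃ I, N.Indep I ∧ I ⊆ X ∧ I.ncard = n} :=
  ⟨0, ∅, N.empty_indep, empty_subset _, Set.ncard_empty _⟩

lemma le_rk (hE : N.E.Finite) (h : ∃ I, N.Indep I ∧ I ⊆ X ∧ I.ncard = n) :
    n ≤ rk N X :=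
  le_csSup (rk_bddAbove hE X) h

lemma rk_le {b : ℕ} (h : ∀ I, N.Indep I → I ⊆ X → I.ncard ≤ b) : rk N X ≤ b := by
  refine csSup_le (rk_nonempty X) ?_
  rintro n ⟨I, hI, hIX, rfl⟩
  exact h I hI hIX

lemma Basis'_rk (hE : N.E.Finite) (hI : N.IsBasis' I X) : rk N X = I.ncard := by
  refine le_antisymm (rk_le fun J hJ hJX => ?_) (le_rk hE ⟨I, hI.indep, hI.subset, rfl⟩)
  obtain ⟨J', hJ', hJJ'⟩ := hJ.subset_isBasis'_of_subset hJX
  have hcard := hJ'.encard_eq_encard hI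
  have hJ'fin : J'.Finite := hE.subset hJ'.indep.subset_ground
  have : J'.ncard = I.ncard := by
    rw [Set.ncard_def, hcard, ← Set.ncard_def]
  exact le_trans (Set.ncard_le_ncard hJJ' hJ'fin) this.le

lemma Indep_rk (hE : N.E.Finite) (hI : N.Indep I) : rk N I = I.ncard :=
  Basis'_rk hE hI.isBasis_self.isBasis'

lemma rk_mono (hE : N.E.Finite) (hXY : X ⊆ Y) : rk N X ≤ rk N Y :=
  rk_le fun J hJ hJX => le_rk hE ⟨J, hJ, hJX.trans hXY, rfl⟩

lemma rk_closure (hE : N.E.Finite) (X : Set α) : rk N (N.closure X) = rk N X := by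
  obtain ⟨I, hI⟩ := N.exists_isBasis' X
  rw [Basis'_rk hE hI, Basis'_rk hE hI.isBasis_closure_right.isBasis']

lemma rk_insert_le (hE : N.E.Finite) : rk N (insert x X) ≤ rk N X + 1 := by
  refine rk_le fun J hJ hJX => ?_
  have hJfin : J.Finite := hE.subset hJ.subset_ground
  have h1 : (J \ {x}).ncard ≤ rk N X :=
    le_rk hE ⟨J \ {x}, hJ.subset diff_subset, by
      intro y hy
      rcases hJX hy.1 with h | h
      · exact absurd h hy.2
      · exact h, rfl⟩
  by_cases hx : x ∈ J
  · have := Set.ncard_diff_singleton_add_one hx hJfin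
    omega
  · rw [Set.diff_singleton_eq_self hx] at h1
    omega

lemma rk_union_le_ncard (hE : N.E.Finite) (hY : Y.Finite) :
    rk N (X ∪ Y) ≤ rk N X + Y.ncard := by
  have key : ∀ (Z : Set α), Z.Finite → ∀ (X : Set α), rk N (X ∪ Z) ≤ rk N X + Z.ncard := by
    intro Z hZ
    refine Set.Finite.induction_on (motive := fun Z _ => ∀ X, rk N (X ∪ Z) ≤ rk N X + Z.ncard)
      Z hZ (fun X => by simp) ?_
    intro y Z hyZ hZfin ih X
    have h1 : rk N (X ∪ insert y Z) ≤ rk N (X ∪ Z) + 1 := by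
      rw [Set.union_insert]
      exact rk_insert_le hE
    have h2 := ih X
    rw [Set.ncard_insert_of_notMem hyZ hZfin]
    omega
  exact key Y hY X

lemma rk_insert_of_not_mem_closure (hE : N.E.Finite) (hx : x ∈ N.E)
    (h : x ∉ N.closure X) : rk N (insert x X) = rk N X + 1 := by
  obtain ⟨I, hI⟩ := N.exists_isBasis' X
  have hxI : x ∉ N.closure I := by rwa [hI.closure_eq_closure]
  have hind : N.Indep (insert x I) :=
    hI.indep.insert_indep_iff.2 (Or.inl ⟨hx, hxI⟩)
  have hxmem : x ∉ I := fun hmem =>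
    hxI (N.mem_closure_of_mem' hmem hx)
  have hfin : I.Finite := hE.subset hI.indep.subset_ground
  refine le_antisymm (rk_insert_le hE) ?_
  have := le_rk hE (X := insert x X)
    ⟨insert x I, hind, insert_subset_insert hI.subset, rfl⟩
  rw [Set.ncard_insert_of_notMem hxmem hfin, ← Basis'_rk hE hI] at this
  exact this

lemma mem_closure_iff_rk (hE : N.E.Finite) (hx : x ∈ N.E) :
    x ∈ N.closure X ↔ rk N (insert x X) = rk N X := by
  constructor
  · intro h
    rw [← rk_closure hE (insert x X), ← rk_closure hE X,
      Matroid.closure_insert_eq_of_mem_closure h]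
  · intro h
    by_contra hcl
    rw [rk_insert_of_not_mem_closure hE hx hcl] at h
    omega

lemma flat_closure (N : Matroid α) (X : Set α) : N.IsFlat (N.closure X) := by
  have hne : Nonempty {F // F ∈ {F | N.IsFlat F ∧ X ∩ N.E ⊆ F}} :=
    ⟨⟨N.E, N.ground_isFlat, inter_subset_right⟩⟩
  have : N.closure X = ⋂ F : {F // F ∈ {F | N.IsFlat F ∧ X ∩ N.E ⊆ F}}, F.1 := by
    rw [Matroid.closure_def, sInter_eq_iInter]
  rw [this]
  exact Matroid.IsFlat.iInter fun F => F.2.1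

lemma flat_eq_of_subset_rk_le (hE : N.E.Finite) (hX : N.IsFlat X) (hY : N.IsFlat Y)
    (hsub : X ⊆ Y) (hrk : rk N Y ≤ rk N X) : X = Y := by
  by_contra hne
  obtain ⟨y, hyY, hyX⟩ := not_subset.1 fun hsub' => hne (hsub.antisymm hsub')
  have hyE : y ∈ N.E := hY.subset_ground hyY
  have hycl : y ∉ N.closure X := by rwa [hX.closure]
  have h1 := rk_insert_of_not_mem_closure hE hyE hycl
  have h2 : rk N (insert y X) ≤ rk N Y := rk_mono hE (insert_subset hyY hsub)
  omega

lemma flat_of_closure_subset (h : N.closure F ⊆ F) (hFE : F ⊆ N.E) : N.IsFlat F := by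
  have hcl : N.closure F = F := h.antisymm (N.subset_closure F hFE)
  refine ⟨fun I X hIF hIX => ?_, hFE⟩
  have h1 : X ⊆ N.closure I := hIX.subset_closure
  have h2 : N.closure I = N.closure F := hIF.closure_eq_closure
  rw [h2, hcl] at h1
  exact h1

lemma exists_circuit_subset (hE : N.E.Finite) {D : Set α} (hDE : D ⊆ N.E)
    (hdep : ¬ N.Indep D) : ∃ C ⊆ D, IsCircuit N C := by
  have hfin : D.Finite := hE.subset hDE
  obtain ⟨n, hn⟩ : ∃ n, D.ncard = n := ⟨_, rfl⟩
  induction n using Nat.strong_induction_on generalizing D with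
  | _ n ih =>
    by_cases h : ∀ x ∈ D, N.Indep (D \ {x})
    · exact ⟨D, Subset.rfl, hDE, hdep, h⟩
    · push_neg at h
      obtain ⟨x, hx, hdep'⟩ := h
      have hlt : (D \ {x}).ncard < n := by
        rw [← hn]
        exact Set.ncard_diff_singleton_lt_of_mem hx hfin
      obtain ⟨C, hCD, hC⟩ := ih _ hlt (diff_subset.trans hDE) hdep'
        (hfin.subset diff_subset) rfl
      exact ⟨C, hCD.trans diff_subset, hC⟩

lemma IsCircuit.rk_add_one (hE : N.E.Finite) (hC : IsCircuit N C) :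
    rk N C + 1 = C.ncard := by
  have hfin : C.Finite := hE.subset hC.1
  have hne : C.Nonempty := by
    rcases C.eq_empty_or_nonempty with rfl | h
    · exact absurd N.empty_indep hC.2.1
    · exact h
  obtain ⟨x, hx⟩ := hne
  have hge : C.ncard - 1 ≤ rk N C := by
    have := le_rk hE (X := C) ⟨C \ {x}, hC.2.2 x hx, diff_subset, rfl⟩
    rwa [Set.ncard_diff_singleton_of_mem hx] at this
  have hlt : rk N C < C.ncard := by
    obtain ⟨I, hI⟩ := N.exists_isBasis' C
    have hIfin : I.Finite := hE.subset hI.indep.subset_ground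
    rw [Basis'_rk hE hI]
    rcases lt_or_eq_of_le (Set.ncard_le_ncard hI.subset hfin) with h | h
    · exact h
    · exfalso
      have : I = C := Set.eq_of_subset_of_ncard_le hI.subset h.ge hfin
      exact hC.2.1 (this ▸ hI.indep)
  have hnepos : 0 < C.ncard := (Set.ncard_pos hfin).2 ⟨x, hx⟩
  omega

lemma not_coloop_of_mem_closure_diff {e : α} (hF : N.IsFlat F) (he : e ∈ F)
    (h : e ∈ N.closure (F \ {e})) : ¬ IsColoop (N ↾ F) e := by
  obtain ⟨I, hI⟩ := N.exists_isBasis (F \ {e}) (diff_subset.trans hF.subset_ground)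
  have hecl : e ∈ N.closure I := by rwa [hI.closure_eq_closure]
  have hFcl : F ⊆ N.closure I := by
    intro y hy
    rcases eq_or_ne y e with rfl | hne
    · exact hecl
    · exact (hI.subset_closure) ⟨hy, hne⟩
  have hIF : N.IsBasis I F :=
    hI.indep.isBasis_of_subset_of_subset_closure (hI.subset.trans diff_subset) hFcl
  have hbase : (N ↾ F).IsBase I := hIF.isBase_restrict
  rintro ⟨-, hall⟩
  exact (hI.subset (hall I hbase)).2 rfl

lemma closure_circuit_cyclicFlat (hC : IsCircuit N C) :
    CyclicFlat N (N.closure C) := by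
  refine ⟨flat_closure N C, fun e he => ?_⟩
  refine not_coloop_of_mem_closure_diff (flat_closure N C) he ?_
  by_cases heC : e ∈ C
  · have hdep : N.Dep (insert e (C \ {e})) := by
      rw [Set.insert_diff_singleton, Set.insert_eq_self.2 heC]
      exact ⟨hC.2.1, hC.1⟩
    have := ((hC.2.2 e heC).insert_dep_iff).1 hdep
    refine N.closure_subset_closure ?_ this.1
    intro c hc
    exact ⟨N.mem_closure_of_mem' hc.1 (hC.1 hc.1), hc.2⟩
  · have hsub : C ⊆ N.closure C \ {e} := fun c hc =>
      ⟨N.mem_closure_of_mem' hc (hC.1 hc), fun h => heC (h ▸ hc)⟩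
    exact N.closure_subset_closure hsub he

end RankBasics

section ConeLemmas

variable {M Q : Matroid α} {T : α → Set α} {a : α} {m : ℕ}
variable {C F I S W X Y Z : Set α} {e f x y t : α}

namespace FreeCone

lemma T'fin (hFC : FreeCone M Q T a m) : (⋃ e ∈ M.E, T e).Finite :=
  hFC.hMfin.biUnion hFC.hTfin

lemma Qfin (hFC : FreeCone M Q T a m) : Q.E.Finite := by
  rw [hFC.hQE]
  exact (hFC.hMfin.union hFC.T'fin).union (finite_singleton a)

lemma EsubQ (hFC : FreeCone M Q T a m) : M.E ⊆ Q.E := by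
  rw [hFC.hQE]; intro x hx; exact Or.inl (Or.inl hx)

lemma T'subQ (hFC : FreeCone M Q T a m) : (⋃ e ∈ M.E, T e) ⊆ Q.E := by
  rw [hFC.hQE]; intro x hx; exact Or.inl (Or.inr hx)

lemma tipQ (hFC : FreeCone M Q T a m) : a ∈ Q.E := by
  rw [hFC.hQE]; exact Or.inr rfl

lemma not_memE_of_mem_T' (hFC : FreeCone M Q T a m) (hx : x ∈ ⋃ e ∈ M.E, T e) :
    x ∉ M.E := by
  obtain ⟨e, he, hxe⟩ := mem_iUnion₂.1 hx
  exact fun hxE => (hFC.hTdisjE e he).ne_of_mem hxe hxE rfl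

lemma tip_not_memE (hFC : FreeCone M Q T a m) : a ∉ M.E := fun h => hFC.ha (Or.inl h)

lemma tip_not_memT' (hFC : FreeCone M Q T a m) : a ∉ ⋃ e ∈ M.E, T e :=
  fun h => hFC.ha (Or.inr h)

lemma rk_pos_of_flat (hFC : FreeCone M Q T a m) (hF : M.IsFlat F) (hne : F.Nonempty) :
    1 ≤ rk M F := by
  obtain ⟨e, he⟩ := hne
  have := le_rk (N := M) hFC.hMfin (X := F)
    ⟨{e}, hFC.hloopless e (hF.subset_ground he), singleton_subset_iff.2 he,
      Set.ncard_singleton e⟩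
  omega

lemma tip_mem_cone (S : Set α) : a ∈ cone T a S := Or.inl (Or.inr rfl)

lemma cyclicFlat_avoid (hFC : FreeCone M Q T a m) (h : CyclicFlat Q F) (haF : a ∉ F) :
    CyclicFlat M F ∧ rk Q F = rk M F ∧ F ⊆ M.E := by
  rcases (hFC.hcyclic F).1 h with h' | ⟨F', -, -, rfl⟩
  · exact ⟨h', hFC.hrank1 F h', h'.1.subset_ground⟩
  · exact absurd (tip_mem_cone F') haF

lemma not_q_indep_of_m_circuit (hFC : FreeCone M Q T a m) (hC : IsCircuit M C) :
    ¬ Q.Indep C := by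
  intro hQI
  have hcf : CyclicFlat M (M.closure C) := closure_circuit_cyclicFlat hC
  have hrk : rk Q (M.closure C) = rk M (M.closure C) := hFC.hrank1 _ hcf
  have h1 : rk M (M.closure C) = rk M C := rk_closure hFC.hMfin C
  have h2 : rk M C + 1 = C.ncard := hC.rk_add_one hFC.hMfin
  have h3 : rk Q C = C.ncard := Indep_rk hFC.Qfin hQI
  have h4 : rk Q C ≤ rk Q (M.closure C) :=
    rk_mono hFC.Qfin (M.subset_closure C hC.1)
  omega

lemma indep_iff (hFC : FreeCone M Q T a m) (hIE : I ⊆ M.E) :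
    Q.Indep I ↔ M.Indep I := by
  constructor
  · intro hQI
    by_contra hMI
    obtain ⟨C, hCI, hC⟩ := exists_circuit_subset hFC.hMfin hIE hMI
    exact hFC.not_q_indep_of_m_circuit hC (hQI.subset hCI)
  · intro hMI
    by_contra hQI
    obtain ⟨C, hCI, hC⟩ := exists_circuit_subset hFC.Qfin (hIE.trans hFC.EsubQ) hQI
    have hCE : C ⊆ M.E := hCI.trans hIE
    have hCMI : M.Indep C := hMI.subset hCI
    have hcirc : rk Q C + 1 = C.ncard := hC.rk_add_one hFC.Qfin
    have hrkM : rk M C = C.ncard := Indep_rk hFC.hMfin hCMI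
    have hcl : rk Q (Q.closure C) = rk Q C := rk_closure hFC.Qfin C
    have hcf : CyclicFlat Q (Q.closure C) := closure_circuit_cyclicFlat hC
    rcases (hFC.hcyclic _).1 hcf with h' | ⟨F', hF', hFne, hcone⟩
    · have h5 : rk Q (Q.closure C) = rk M (Q.closure C) := hFC.hrank1 _ h'
      have h6 : rk M C ≤ rk M (Q.closure C) :=
        rk_mono hFC.hMfin (Q.subset_closure C (hC.1))
      omega
    · have hCF' : C ⊆ F' := by
        intro z hz
        have hzcone : z ∈ cone T a F' := hcone ▸ Q.subset_closure C hC.1 hz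
        rcases hzcone with (hz' | hz') | hz'
        · exact hz'
        · exact absurd (hz' ▸ hCE hz) hFC.tip_not_memE
        · obtain ⟨g, hg, hzg⟩ := mem_iUnion₂.1 hz'
          exact absurd (hCE hz)
            (hFC.not_memE_of_mem_T' (mem_iUnion₂.2 ⟨g, hF'.subset_ground hg, hzg⟩))
      have h5 : rk Q (Q.closure C) = rk M F' + 1 := by
        rw [hcone]; exact hFC.hrank2 F' hF' hFne
      have h6 : rk M C ≤ rk M F' := rk_mono hFC.hMfin hCF'
      omega

lemma rk_eq (hFC : FreeCone M Q T a m) (hX : X ⊆ M.E) : rk Q X = rk M X := by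
  unfold rk
  congr 1
  ext n
  constructor
  · rintro ⟨I, hI, hIX, rfl⟩
    exact ⟨I, (hFC.indep_iff (hIX.trans hX)).1 hI, hIX, rfl⟩
  · rintro ⟨I, hI, hIX, rfl⟩
    exact ⟨I, (hFC.indep_iff (hIX.trans hX)).2 hI, hIX, rfl⟩

lemma closure_sub (hFC : FreeCone M Q T a m) (hS : S ⊆ M.E) :
    M.closure S ⊆ Q.closure S := by
  intro x hx
  have hxE : x ∈ M.E := M.closure_subset_ground S hx
  have h1 : rk M (insert x S) = rk M S := (mem_closure_iff_rk hFC.hMfin hxE).1 hx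
  have h2 : rk Q (insert x S) = rk Q S := by
    rw [hFC.rk_eq (insert_subset hxE hS), hFC.rk_eq hS, h1]
  exact (mem_closure_iff_rk hFC.Qfin (hFC.EsubQ hxE)).2 h2

lemma big_circuit (hFC : FreeCone M Q T a m) (hC : IsCircuit Q C)
    (hz : z ∈ C) (hzE : z ∉ M.E) : 3 ≤ C.ncard := by
  have hcf : CyclicFlat Q (Q.closure C) := closure_circuit_cyclicFlat hC
  have hcl : rk Q (Q.closure C) = rk Q C := rk_closure hFC.Qfin C
  have hcirc : rk Q C + 1 = C.ncard := hC.rk_add_one hFC.Qfin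
  rcases (hFC.hcyclic _).1 hcf with h' | ⟨F', hF', hFne, hcone⟩
  · exact absurd (h'.1.subset_ground (Q.subset_closure C hC.1 hz)) hzE
  · have h5 : rk Q (Q.closure C) = rk M F' + 1 := by
      rw [hcone]; exact hFC.hrank2 F' hF' hFne
    have h6 := hFC.rk_pos_of_flat hF' hFne
    omega

lemma pair_indep (hFC : FreeCone M Q T a m) (hx : x ∈ Q.E) (hy : y ∈ Q.E)
    (hyE : y ∉ M.E) : Q.Indep {x, y} := by
  by_contra hdep
  have hsub : ({x, y} : Set α) ⊆ Q.E := by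
    intro w hw; rcases hw with rfl | rfl; exacts [hx, hy]
  obtain ⟨C, hCsub, hC⟩ := exists_circuit_subset hFC.Qfin hsub hdep
  have hCfin : C.Finite := hFC.Qfin.subset hC.1
  have hcard : C.ncard ≤ 2 := by
    have := Set.ncard_le_ncard hCsub ((Set.finite_singleton y).insert x)
    have h2 : ({x, y} : Set α).ncard ≤ 2 := by
      rcases eq_or_ne x y with rfl | hne
      · simp
      · rw [Set.ncard_pair hne]
    omega
  by_cases hyC : y ∈ C
  · have := hFC.big_circuit hC hyC hyE
    omega
  · have hCx : C ⊆ {x} := by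
      intro w hw
      rcases hCsub hw with rfl | rfl
      · rfl
      · exact absurd hw hyC
    have hne : C.Nonempty := by
      rcases C.eq_empty_or_nonempty with rfl | h
      · exact absurd Q.empty_indep hC.2.1
      · exact h
    have hCeq : C = {x} := (Set.subset_singleton_iff_eq.1 hCx).resolve_left hne.ne_empty
    by_cases hxE : x ∈ M.E
    · exact hC.2.1 (hCeq ▸ (hFC.indep_iff (by simp [hxE])).2 (hFC.hloopless x hxE))
    · have := hFC.big_circuit hC (hCeq ▸ rfl : x ∈ C) hxE
      omega

lemma cone_pt_flat (hFC : FreeCone M Q T a m) (hf : f ∈ M.E) :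
    Q.IsFlat (cone T a (M.closure {f})) ∧ rk Q (cone T a (M.closure {f})) = 2 := by
  have hF' : M.IsFlat (M.closure {f}) := flat_closure M {f}
  have hne : (M.closure {f}).Nonempty := ⟨f, M.mem_closure_self f hf⟩
  have hcf : CyclicFlat Q (cone T a (M.closure {f})) :=
    (hFC.hcyclic _).2 (Or.inr ⟨M.closure {f}, hF', hne, rfl⟩)
  refine ⟨hcf.1, ?_⟩
  have h1 := hFC.hrank2 _ hF' hne
  have h2 : rk M (M.closure {f}) = rk M {f} := rk_closure hFC.hMfin {f}
  have h3 : rk M {f} = 1 := by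
    rw [Indep_rk hFC.hMfin (hFC.hloopless f hf), Set.ncard_singleton]
  omega

lemma mem_cone_pt_self (hf : f ∈ M.E) (hfQ : f ∈ M.E) :
    f ∈ cone T a (M.closure {f}) := Or.inl (Or.inl (Matroid.mem_closure_self M f hf))

lemma mem_cone_pt_T (hf : f ∈ M.E) (ht : t ∈ T f) :
    t ∈ cone T a (M.closure {f}) :=
  Or.inr (mem_iUnion₂.2 ⟨f, Matroid.mem_closure_self M f hf, ht⟩)

lemma pair_closure (hFC : FreeCone M Q T a m) (hf : f ∈ M.E)
    (hx : x ∈ cone T a (M.closure {f})) (hy : y ∈ cone T a (M.closure {f}))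
    (hxy : x ≠ y) (hind : Q.Indep {x, y}) :
    Q.closure {x, y} = cone T a (M.closure {f}) := by
  obtain ⟨hflat, hrk⟩ := hFC.cone_pt_flat hf
  have hsub : ({x, y} : Set α) ⊆ cone T a (M.closure {f}) := by
    intro w hw; rcases hw with rfl | rfl; exacts [hx, hy]
  have hclsub : Q.closure {x, y} ⊆ cone T a (M.closure {f}) := by
    have := Q.closure_subset_closure hsub
    rwa [hflat.closure] at this
  have h1 : rk Q (Q.closure {x, y}) = 2 := by
    rw [rk_closure hFC.Qfin, Indep_rk hFC.Qfin hind, Set.ncard_pair hxy]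
  exact flat_eq_of_subset_rk_le hFC.Qfin (flat_closure Q _) hflat hclsub (by omega)

lemma col_fT (hFC : FreeCone M Q T a m) (hf : f ∈ M.E) (ht : t ∈ T f) :
    a ∈ Q.closure {f, t} := by
  have htT' : t ∈ ⋃ e ∈ M.E, T e := mem_iUnion₂.2 ⟨f, hf, ht⟩
  have hne : f ≠ t := fun h => hFC.not_memE_of_mem_T' htT' (h ▸ hf)
  have hind : Q.Indep {f, t} :=
    hFC.pair_indep (hFC.EsubQ hf) (hFC.T'subQ htT') (hFC.not_memE_of_mem_T' htT')
  rw [hFC.pair_closure hf (mem_cone_pt_self hf hf) (mem_cone_pt_T hf ht) hne hind]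
  exact tip_mem_cone _

lemma col_aT (hFC : FreeCone M Q T a m) (hf : f ∈ M.E) (ht : t ∈ T f) :
    f ∈ Q.closure {a, t} := by
  have htT' : t ∈ ⋃ e ∈ M.E, T e := mem_iUnion₂.2 ⟨f, hf, ht⟩
  have hne : a ≠ t := fun h => hFC.tip_not_memT' (h ▸ htT')
  have hind : Q.Indep {a, t} :=
    hFC.pair_indep hFC.tipQ (hFC.T'subQ htT') (hFC.not_memE_of_mem_T' htT')
  rw [hFC.pair_closure hf (tip_mem_cone _) (mem_cone_pt_T hf ht) hne hind]
  exact mem_cone_pt_self hf hf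

lemma col_af (hFC : FreeCone M Q T a m) (hf : f ∈ M.E) (ht : t ∈ T f) :
    t ∈ Q.closure {a, f} := by
  have hne : a ≠ f := fun h => hFC.tip_not_memE (h ▸ hf)
  have hind : Q.Indep {f, a} :=
    hFC.pair_indep (hFC.EsubQ hf) hFC.tipQ hFC.tip_not_memE
  rw [Set.pair_comm a f]
  rw [hFC.pair_closure hf (mem_cone_pt_self hf hf) (tip_mem_cone _) hne.symm
    hind]
  exact mem_cone_pt_T hf ht

lemma col_TT (hFC : FreeCone M Q T a m) (hf : f ∈ M.E) (ht : t ∈ T f)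
    {t' : α} (ht' : t' ∈ T f) (hne : t ≠ t') : a ∈ Q.closure {t, t'} := by
  have htT' : t ∈ ⋃ e ∈ M.E, T e := mem_iUnion₂.2 ⟨f, hf, ht⟩
  have ht'T' : t' ∈ ⋃ e ∈ M.E, T e := mem_iUnion₂.2 ⟨f, hf, ht'⟩
  have hind : Q.Indep {t, t'} :=
    hFC.pair_indep (hFC.T'subQ htT') (hFC.T'subQ ht'T') (hFC.not_memE_of_mem_T' ht'T')
  rw [hFC.pair_closure hf (mem_cone_pt_T hf ht) (mem_cone_pt_T hf ht') hne hind]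
  exact tip_mem_cone _

lemma flatE (hFC : FreeCone M Q T a m) (hW : Q.IsFlat W) (haW : a ∉ W) :
    M.IsFlat (W ∩ M.E) := by
  refine flat_of_closure_subset ?_ inter_subset_right
  intro x hx
  have hxE : x ∈ M.E := M.closure_subset_ground _ hx
  have hxQ : x ∈ Q.closure (W ∩ M.E) := hFC.closure_sub inter_subset_right hx
  have : Q.closure (W ∩ M.E) ⊆ W := by
    have := Q.closure_subset_closure (inter_subset_left (s := W) (t := M.E))
    rwa [hW.closure] at this
  exact ⟨this hxQ, hxE⟩

lemma decompW (hFC : FreeCone M Q T a m) (hWQ : W ⊆ Q.E) (haW : a ∉ W) :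
    W = (W ∩ M.E) ∪ (W ∩ ⋃ e ∈ M.E, T e) := by
  ext w
  constructor
  · intro hw
    have := hWQ hw
    rw [hFC.hQE] at this
    rcases this with (h | h) | h
    · exact Or.inl ⟨hw, h⟩
    · exact Or.inr ⟨hw, h⟩
    · exact absurd (h ▸ hw : a ∈ W) haW
  · rintro (⟨h, -⟩ | ⟨h, -⟩) <;> exact h

lemma rk_flat_avoid (hFC : FreeCone M Q T a m) (hW : Q.IsFlat W) (haW : a ∉ W) :
    rk Q W = rk M (W ∩ M.E) + (W ∩ ⋃ e ∈ M.E, T e).ncard := by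
  have hdec := hFC.decompW hW.subset_ground haW
  have hTfin : (W ∩ ⋃ e ∈ M.E, T e).Finite := hFC.T'fin.subset inter_subset_right
  refine le_antisymm ?_ ?_
  · calc rk Q W = rk Q ((W ∩ M.E) ∪ (W ∩ ⋃ e ∈ M.E, T e)) := by rw [← hdec]
    _ ≤ rk Q (W ∩ M.E) + (W ∩ ⋃ e ∈ M.E, T e).ncard :=
        rk_union_le_ncard hFC.Qfin hTfin
    _ = rk M (W ∩ M.E) + (W ∩ ⋃ e ∈ M.E, T e).ncard := by
        rw [hFC.rk_eq inter_subset_right]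
  · obtain ⟨I, hI⟩ := M.exists_isBasis' (W ∩ M.E)
    have hrkI : rk M (W ∩ M.E) = I.ncard := Basis'_rk hFC.hMfin hI
    have hIE : I ⊆ M.E := hI.indep.subset_ground
    have hIQ : Q.Indep I := (hFC.indep_iff hIE).2 hI.indep
    set J := I ∪ (W ∩ ⋃ e ∈ M.E, T e) with hJ
    have hJW : J ⊆ W := union_subset (hI.subset.trans inter_subset_left) inter_subset_left
    have hJind : Q.Indep J := by
      by_contra hdep
      obtain ⟨C, hCJ, hC⟩ := exists_circuit_subset hFC.Qfin
        (hJW.trans hW.subset_ground) hdep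
      have hCW : C ⊆ W := hCJ.trans hJW
      have hclW : Q.closure C ⊆ W := by
        have := Q.closure_subset_closure hCW
        rwa [hW.closure] at this
      have hacl : a ∉ Q.closure C := fun h => haW (hclW h)
      obtain ⟨-, -, hCME⟩ := hFC.cyclicFlat_avoid (closure_circuit_cyclicFlat hC) hacl
      have hCE : C ⊆ M.E := (Q.subset_closure C hC.1).trans hCME
      have hCI : C ⊆ I := by
        intro c hc
        rcases hCJ hc with h | h
        · exact h
        · exact absurd (hCE hc) (hFC.not_memE_of_mem_T' h.2)
      exact hC.2.1 (hIQ.subset hCI)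
    have hdisj : Disjoint I (W ∩ ⋃ e ∈ M.E, T e) := by
      rw [Set.disjoint_left]
      intro z hzI hzT
      exact hFC.not_memE_of_mem_T' hzT.2 (hIE hzI)
    have hIfin : I.Finite := hFC.hMfin.subset hIE
    have hJcard : J.ncard = I.ncard + (W ∩ ⋃ e ∈ M.E, T e).ncard :=
      Set.ncard_union_eq hdisj hIfin hTfin
    have := le_rk hFC.Qfin (X := W) ⟨J, hJind, hJW, rfl⟩
    omega

lemma fiber_subsingleton (hFC : FreeCone M Q T a m) (hW : Q.IsFlat W) (haW : a ∉ W)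
    (hf : f ∈ M.E) : (W ∩ T f).Subsingleton := by
  intro t ht t' ht'
  by_contra hne
  have hcl : Q.closure {t, t'} ⊆ W := by
    have hsub : ({t, t'} : Set α) ⊆ W := by
      intro w hw; rcases hw with rfl | rfl; exacts [ht.1, ht'.1]
    have := Q.closure_subset_closure hsub
    rwa [hW.closure] at this
  exact haW (hcl (hFC.col_TT hf ht.2 ht'.2 hne))

lemma no_mixed (hFC : FreeCone M Q T a m) (hW : Q.IsFlat W) (haW : a ∉ W)
    (hf : f ∈ M.E) (hfW : f ∈ W) (ht : t ∈ W ∩ T f) : False := by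
  have hcl : Q.closure {f, t} ⊆ W := by
    have hsub : ({f, t} : Set α) ⊆ W := by
      intro w hw; rcases hw with rfl | rfl; exacts [hfW, ht.1]
    have := Q.closure_subset_closure hsub
    rwa [hW.closure] at this
  exact haW (hcl (hFC.col_fT hf ht.2))

lemma pT_card_le (hFC : FreeCone M Q T a m) (hW : Q.IsFlat W) (haW : a ∉ W) :
    {e ∈ M.E | (W ∩ T e).Nonempty}.ncard ≤ (W ∩ ⋃ e ∈ M.E, T e).ncard := by
  classical
  have hTfin : (W ∩ ⋃ e ∈ M.E, T e).Finite := hFC.T'fin.subset inter_subset_right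
  refine Set.ncard_le_ncard_of_injOn
    (fun e => if h : (W ∩ T e).Nonempty then h.some else a) ?_ ?_ hTfin
  · rintro e ⟨heE, hne⟩
    simp only [dif_pos hne]
    exact ⟨hne.some_mem.1, mem_iUnion₂.2 ⟨e, heE, hne.some_mem.2⟩⟩
  · rintro e ⟨heE, hene⟩ e' ⟨heE', hene'⟩ heq
    simp only [dif_pos hene, dif_pos hene'] at heq
    by_contra hne
    have h1 := hene.some_mem.2
    have h2 := hene'.some_mem.2
    rw [heq] at h1
    exact (hFC.hTdisj e heE e' heE' hne).ne_of_mem h1 h2 rfl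

lemma rk_proj_eq (hFC : FreeCone M Q T a m) (hW : Q.IsFlat W) (haW : a ∉ W) :
    rk M (proj M.E T W) = rk M (W ∩ M.E) + (W ∩ ⋃ e ∈ M.E, T e).ncard := by
  have hpTE : {e ∈ M.E | (W ∩ T e).Nonempty} ⊆ M.E := fun e he => he.1
  have hpWE : proj M.E T W ⊆ M.E := union_subset inter_subset_right hpTE
  have hpTfin : {e ∈ M.E | (W ∩ T e).Nonempty}.Finite := hFC.hMfin.subset hpTE
  refine le_antisymm ?_ ?_
  · calc rk M (proj M.E T W)
        ≤ rk M (W ∩ M.E) + {e ∈ M.E | (W ∩ T e).Nonempty}.ncard :=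
          rk_union_le_ncard hFC.hMfin hpTfin
    _ ≤ rk M (W ∩ M.E) + (W ∩ ⋃ e ∈ M.E, T e).ncard := by
          have := hFC.pT_card_le hW haW
          omega
  · have hacl : a ∉ Q.closure W := by rw [hW.closure]; exact haW
    have h2 : rk Q (insert a W) = rk Q W + 1 :=
      rk_insert_of_not_mem_closure hFC.Qfin hFC.tipQ hacl
    have hinsQ : insert a (proj M.E T W) ⊆ Q.E :=
      insert_subset hFC.tipQ (hpWE.trans hFC.EsubQ)
    have h3 : insert a W ⊆ Q.closure (insert a (proj M.E T W)) := by
      intro w hw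
      rcases hw with rfl | hwW
      · exact Q.subset_closure _ hinsQ (mem_insert _ _)
      · have hwQ : w ∈ Q.E := hW.subset_ground hwW
        rw [hFC.hQE] at hwQ
        rcases hwQ with (hE | hT) | hA
        · exact Q.subset_closure _ hinsQ (Or.inr (Or.inl ⟨hwW, hE⟩))
        · obtain ⟨g, hg, hwg⟩ := mem_iUnion₂.1 hT
          have hgp : g ∈ proj M.E T W := Or.inr ⟨hg, ⟨w, hwW, hwg⟩⟩
          have : Q.closure {a, g} ⊆ Q.closure (insert a (proj M.E T W)) :=
            Q.closure_subset_closure (by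
              intro z hz; rcases hz with rfl | rfl
              exacts [mem_insert _ _, Or.inr hgp])
          exact this (hFC.col_af hg hwg)
        · exact absurd (hA ▸ hwW : a ∈ W) haW
    have h4 : rk Q (insert a W) ≤ rk Q (insert a (proj M.E T W)) := by
      calc rk Q (insert a W) ≤ rk Q (Q.closure (insert a (proj M.E T W))) :=
            rk_mono hFC.Qfin h3
      _ = rk Q (insert a (proj M.E T W)) := rk_closure hFC.Qfin _
    have h5 : rk Q (insert a (proj M.E T W)) ≤ rk Q (proj M.E T W) + 1 :=
      rk_insert_le hFC.Qfin
    have h6 : rk Q (proj M.E T W) = rk M (proj M.E T W) := hFC.rk_eq hpWE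
    have h7 := hFC.rk_flat_avoid hW haW
    omega

end FreeCone

end ConeLemmas


/-- In a flag of the free `m`-cone, if `Y (j-1)` does not contain the tip, then
the next flat `Y j` arises in exactly one of three ways. -/
theorem flag_step_trichotomy {M Q : Matroid α} {T : α → Set α} {a : α} {m k : ℕ}
    (hFC : FreeCone M Q T a m) (hk : rk M M.E = k)
    (Y : ℕ → Set α) (hY : IsFlag Q (k + 1) Y)
    (j : ℕ) (hj1 : 1 ≤ j) (hj2 : j ≤ k + 1) (haY : a ∉ Y (j - 1)) :
    ∃! c : Fin 3,
      ![ Y j = Q.closure (Y (j - 1) ∪ {a}),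
         Y j \ M.E = Y (j - 1) \ M.E ∧
           rk M (Y j ∩ M.E) = rk M (Y (j - 1) ∩ M.E) + 1,
         ∃ x ∈ ⋃ e ∈ M.E, T e, Y j = Y (j - 1) ∪ {x} ∧
           ¬ proj M.E T {x} ⊆ M.closure (proj M.E T (Y (j - 1))) ] c := by
  classical
  obtain ⟨hZflat, hZrk⟩ := hY.1 j hj2
  obtain ⟨hXflat, hXrk⟩ := hY.1 (j - 1) (by omega)
  have hXZ' : Y (j - 1) ⊂ Y j := by
    have h := hY.2 (j - 1) (by omega)
    have hjj : j - 1 + 1 = j := by omega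
    rwa [hjj] at h
  set X := Y (j - 1) with hXdef
  set Z := Y j with hZdef
  have hXZ : X ⊂ Z := hXZ'
  have hrkZX : rk Q Z = rk Q X + 1 := by omega
  have hQfin := hFC.Qfin
  have hEfin := hFC.hMfin
  have hT'fin := hFC.T'fin
  have haQ := hFC.tipQ
  have hXE : X ⊆ Q.E := hXflat.subset_ground
  have hZE : Z ⊆ Q.E := hZflat.subset_ground
  have hclXa : a ∈ Q.closure (X ∪ {a}) := by
    refine Q.subset_closure _ (union_subset hXE (by simpa using haQ)) (Or.inr rfl)
  by_cases haZ : a ∈ Z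
  · -- case (i)
    have hacl : a ∉ Q.closure X := by rw [hXflat.closure]; exact haY
    have h1 : rk Q (insert a X) = rk Q X + 1 :=
      rk_insert_of_not_mem_closure hQfin haQ hacl
    have hsub : Q.closure (insert a X) ⊆ Z := by
      have hins : insert a X ⊆ Z := insert_subset haZ hXZ.subset
      have h := Q.closure_subset_closure hins
      rwa [hZflat.closure] at h
    have hrkcl : rk Q Z ≤ rk Q (Q.closure (insert a X)) := by
      rw [rk_closure hQfin]; omega
    have hP0 : Z = Q.closure (X ∪ {a}) := by
      rw [union_singleton]
      exact (flat_eq_of_subset_rk_le hQfin (flat_closure Q _) hZflat hsub hrkcl).symm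
    refine ⟨0, by simp only [Matrix.cons_val_zero]; exact hP0, ?_⟩
    intro c hc
    fin_cases c
    · rfl
    · exfalso
      simp only [Matrix.cons_val_one, Matrix.head_cons] at hc
      have haZE : a ∈ Z \ M.E := ⟨haZ, hFC.tip_not_memE⟩
      rw [hc.1] at haZE
      exact haY haZE.1
    · exfalso
      simp only [Matrix.cons_val_two, Matrix.tail_cons, Matrix.head_cons] at hc
      obtain ⟨x, hxT', hZeq, -⟩ := hc
      rcases (hZeq ▸ haZ) with h | h
      · exact haY h
      · exact hFC.tip_not_memT' (h ▸ hxT')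
  · -- cases (ii)/(iii)
    have hXint := hFC.rk_flat_avoid hXflat haY
    have hZint := hFC.rk_flat_avoid hZflat haZ
    have hXEflat := hFC.flatE hXflat haY
    have hZEflat := hFC.flatE hZflat haZ
    have hmonoE : rk M (X ∩ M.E) ≤ rk M (Z ∩ M.E) :=
      rk_mono hEfin (inter_subset_inter_left _ hXZ.subset)
    have hZTfin : (Z ∩ ⋃ e ∈ M.E, T e).Finite := hT'fin.subset inter_subset_right
    have hXTfin : (X ∩ ⋃ e ∈ M.E, T e).Finite := hT'fin.subset inter_subset_right
    have hmonoT : (X ∩ ⋃ e ∈ M.E, T e).ncard ≤ (Z ∩ ⋃ e ∈ M.E, T e).ncard :=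
      Set.ncard_le_ncard (inter_subset_inter_left _ hXZ.subset) hZTfin
    have hdiffX : X \ M.E = X ∩ ⋃ e ∈ M.E, T e := by
      ext w
      constructor
      · rintro ⟨hwW, hwE⟩
        rcases (hFC.decompW hXE haY) ▸ hwW with h | h
        · exact absurd h.2 hwE
        · exact h
      · rintro ⟨hw, hwT⟩
        exact ⟨hw, hFC.not_memE_of_mem_T' hwT⟩
    have hdiffZ : Z \ M.E = Z ∩ ⋃ e ∈ M.E, T e := by
      ext w
      constructor
      · rintro ⟨hwW, hwE⟩
        rcases (hFC.decompW hZE haZ) ▸ hwW with h | h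
        · exact absurd h.2 hwE
        · exact h
      · rintro ⟨hw, hwT⟩
        exact ⟨hw, hFC.not_memE_of_mem_T' hwT⟩
    have hnotP0 : Z ≠ Q.closure (X ∪ {a}) := fun h => haZ (h ▸ hclXa)
    by_cases hnT : (Z ∩ ⋃ e ∈ M.E, T e).ncard = (X ∩ ⋃ e ∈ M.E, T e).ncard
    · -- case (ii)
      have hTeq : X ∩ (⋃ e ∈ M.E, T e) = Z ∩ ⋃ e ∈ M.E, T e :=
        Set.eq_of_subset_of_ncard_le (inter_subset_inter_left _ hXZ.subset)
          hnT.le hZTfin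
      have hP1 : Z \ M.E = X \ M.E ∧ rk M (Z ∩ M.E) = rk M (X ∩ M.E) + 1 := by
        constructor
        · rw [hdiffZ, hdiffX, hTeq]
        · omega
      refine ⟨1, by simp only [Matrix.cons_val_one, Matrix.head_cons]; exact hP1, ?_⟩
      intro c hc
      fin_cases c
      · exfalso
        simp only [Matrix.cons_val_zero] at hc
        exact hnotP0 hc
      · rfl
      · exfalso
        simp only [Matrix.cons_val_two, Matrix.tail_cons, Matrix.head_cons] at hc
        obtain ⟨x, hxT', hZeq, -⟩ := hc
        have hxZ : x ∈ Z := hZeq ▸ Or.inr rfl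
        have hxX : x ∉ X := by
          intro hx
          have : Z = X := by
            rw [hZeq, union_singleton, insert_eq_self.2 hx]
          exact hXZ.ne this.symm
        have : x ∈ X ∩ ⋃ e ∈ M.E, T e := hTeq ▸ ⟨hxZ, hxT'⟩
        exact hxX this.1
    · -- case (iii)
      have harith : (Z ∩ ⋃ e ∈ M.E, T e).ncard = (X ∩ ⋃ e ∈ M.E, T e).ncard + 1 ∧
          rk M (Z ∩ M.E) = rk M (X ∩ M.E) := by omega
      have hEeq : X ∩ M.E = Z ∩ M.E :=
        flat_eq_of_subset_rk_le hEfin hXEflat hZEflat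
          (inter_subset_inter_left _ hXZ.subset) harith.2.le
      obtain ⟨x, hxZT, hxXT⟩ : ∃ x, x ∈ Z ∩ (⋃ e ∈ M.E, T e) ∧
          x ∉ X ∩ ⋃ e ∈ M.E, T e := by
        by_contra h
        push_neg at h
        have hsub : Z ∩ (⋃ e ∈ M.E, T e) ⊆ X ∩ ⋃ e ∈ M.E, T e := h
        have := Set.ncard_le_ncard hsub hXTfin
        omega
      have hxX : x ∉ X := fun hx => hxXT ⟨hx, hxZT.2⟩
      have hZT : Z ∩ (⋃ e ∈ M.E, T e) = insert x (X ∩ ⋃ e ∈ M.E, T e) := by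
        refine (Set.eq_of_subset_of_ncard_le ?_ ?_ hZTfin).symm
        · exact insert_subset hxZT (inter_subset_inter_left _ hXZ.subset)
        · rw [Set.ncard_insert_of_notMem hxXT hXTfin]
          omega
      have hZeq : Z = X ∪ {x} := by
        rw [union_singleton]
        calc Z = (Z ∩ M.E) ∪ (Z ∩ ⋃ e ∈ M.E, T e) := hFC.decompW hZE haZ
        _ = (X ∩ M.E) ∪ insert x (X ∩ ⋃ e ∈ M.E, T e) := by rw [← hEeq, hZT]
        _ = insert x ((X ∩ M.E) ∪ (X ∩ ⋃ e ∈ M.E, T e)) := by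
            rw [Set.union_insert]
        _ = insert x X := by rw [← hFC.decompW hXE haY]
      obtain ⟨f, hf, hxf⟩ := mem_iUnion₂.1 hxZT.2
      have hrkpX := hFC.rk_proj_eq hXflat haY
      have hrkpZ := hFC.rk_proj_eq hZflat haZ
      have hsub2 : proj M.E T Z ⊆ insert f (proj M.E T X) := by
        rintro w (⟨hwZ, hwE⟩ | ⟨hwE, hne⟩)
        · exact Or.inr (Or.inl (hEeq ▸ (⟨hwZ, hwE⟩ : w ∈ Z ∩ M.E)))
        · obtain ⟨t, htZ, htw⟩ := hne
          have htT' : t ∈ ⋃ e ∈ M.E, T e := mem_iUnion₂.2 ⟨w, hwE, htw⟩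
          have : t ∈ insert x (X ∩ ⋃ e ∈ M.E, T e) := hZT ▸ ⟨htZ, htT'⟩
          rcases this with rfl | htX
          · -- t = x : fibers w and f intersect
            rcases eq_or_ne w f with rfl | hne'
            · exact Or.inl rfl
            · exact absurd rfl
                ((hFC.hTdisj w hwE f hf hne').ne_of_mem htw hxf)
          · exact Or.inr (Or.inr ⟨hwE, ⟨t, htX.1, htw⟩⟩)
      have hfncl : f ∉ M.closure (proj M.E T X) := by
        intro hmem
        have hpXE : proj M.E T X ⊆ M.E :=
          union_subset inter_subset_right (fun e he => he.1)
        have hins : insert f (proj M.E T X) ⊆ M.closure (proj M.E T X) :=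
          insert_subset hmem (M.subset_closure _ hpXE)
        have h1 : rk M (proj M.E T Z) ≤ rk M (proj M.E T X) := by
          calc rk M (proj M.E T Z) ≤ rk M (M.closure (proj M.E T X)) :=
                rk_mono hEfin (hsub2.trans hins)
          _ = rk M (proj M.E T X) := rk_closure hEfin _
        omega
      have hP2 : ∃ x ∈ ⋃ e ∈ M.E, T e, Z = X ∪ {x} ∧
          ¬ proj M.E T {x} ⊆ M.closure (proj M.E T X) := by
        refine ⟨x, hxZT.2, hZeq, fun hsubp => ?_⟩
        have hfp : f ∈ proj M.E T {x} := Or.inr ⟨hf, ⟨x, rfl, hxf⟩⟩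
        exact hfncl (hsubp hfp)
      refine ⟨2, by
        simp only [Matrix.cons_val_two, Matrix.tail_cons, Matrix.head_cons]
        exact hP2, ?_⟩
      intro c hc
      fin_cases c
      · exfalso
        simp only [Matrix.cons_val_zero] at hc
        exact hnotP0 hc
      · exfalso
        simp only [Matrix.cons_val_one, Matrix.head_cons] at hc
        have hxZ : x ∈ Z \ M.E := ⟨hxZT.1, hFC.not_memE_of_mem_T' hxZT.2⟩
        rw [hc.1] at hxZ
        exact hxX hxZ.1
      · rfl

end ConePaper
end

section
/- Let M be a loopless matroid on E, m > 1, and Q = Q_m(M) with tip a. Then the cyclic flats of the deletion Q \ {a} are exactly the cyclic flats of M together with the sets q(F) - {a} for F a nonempty flat of M. -/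
open Set Matroid

namespace ConePaper

variable {α : Type*}

/-! ### Auxiliary lemmas -/

lemma flat_closure_s18 (M : Matroid α) (X : Set α) : M.IsFlat (M.closure X) := by
  have hne : Nonempty {F // M.IsFlat F ∧ X ∩ M.E ⊆ F} :=
    ⟨⟨M.E, M.ground_isFlat, inter_subset_right⟩⟩
  have h := Matroid.IsFlat.iInter (M := M)
    (Fs := fun F : {F // M.IsFlat F ∧ X ∩ M.E ⊆ F} => F.1) fun F => F.2.1
  have he : M.closure X = ⋂ F : {F // M.IsFlat F ∧ X ∩ M.E ⊆ F}, F.1 := by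
    rw [closure_def, sInter_eq_iInter]
    rfl
  rw [he]; exact h

lemma restrict_closure' (M : Matroid α) {X R : Set α} (hXR : X ⊆ R) (hR : R ⊆ M.E) :
    (M ↾ R).closure X = M.closure X ∩ R := by
  obtain ⟨I, hI⟩ := (M ↾ R).exists_isBasis X (by simpa using hXR)
  have hIM : M.IsBasis I X := ((isBasis_restrict_iff hR).1 hI).1
  have hIR : I ⊆ R := hI.indep.subset_ground
  rw [← hI.closure_eq_closure, ← hIM.closure_eq_closure]
  ext e
  simp only [mem_inter_iff, hI.indep.mem_closure_iff, hIM.indep.mem_closure_iff,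
    restrict_dep_iff]
  simp only [dep_iff]
  constructor
  · rintro (⟨hd, hsub⟩ | heI)
    · exact ⟨Or.inl ⟨hd, hsub.trans hR⟩, hsub (mem_insert _ _)⟩
    · exact ⟨Or.inr heI, hIR heI⟩
  · rintro ⟨(⟨hd, _⟩ | heI), heR⟩
    · exact Or.inl ⟨hd, insert_subset heR hIR⟩
    · exact Or.inr heI

lemma not_coloop_of_mem_closure {N : Matroid α} {Z : Set α} (hZ : Z ⊆ N.E) {e : α}
    (he : e ∈ Z) (h : e ∈ N.closure (Z \ {e})) : ¬ IsColoop (N ↾ Z) e := by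
  rintro ⟨-, hall⟩
  have hsp : (N ↾ Z).Spanning (Z \ {e}) := by
    rw [spanning_iff_ground_subset_closure (show Z \ {e} ⊆ (N ↾ Z).E by
      simpa using (diff_subset : Z \ {e} ⊆ Z))]
    rw [restrict_closure' N diff_subset hZ]
    intro z hz
    refine ⟨?_, hz⟩
    by_cases hze : z = e
    · subst hze; exact h
    · exact N.subset_closure (Z \ {e}) (diff_subset.trans hZ) ⟨hz, hze⟩
  obtain ⟨B, hB, hBsub⟩ := hsp.exists_isBase_subset
  exact (hBsub (hall B hB)).2 rfl

lemma mem_closure_of_not_coloop {N : Matroid α} {Z : Set α} (hZ : Z ⊆ N.E) {e : α}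
    (he : e ∈ Z) (h : ¬ IsColoop (N ↾ Z) e) : e ∈ N.closure (Z \ {e}) := by
  rw [IsColoop] at h
  push_neg at h
  obtain ⟨B, hB, heB⟩ := h (by simpa using he)
  have hBZ : B ⊆ Z := hB.subset_ground
  have hcl : (N ↾ Z).closure B = Z := hB.closure_eq
  rw [restrict_closure' N hBZ hZ] at hcl
  have h2 : Z ⊆ N.closure B := by
    rw [← hcl]; exact inter_subset_left
  exact (N.closure_subset_closure (subset_diff_singleton hBZ heB)) (h2 he)

lemma cyclicFlat_iff' {N : Matroid α} {Z : Set α} :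
    CyclicFlat N Z ↔ N.IsFlat Z ∧ ∀ e ∈ Z, e ∈ N.closure (Z \ {e}) :=
  ⟨fun ⟨hf, hc⟩ => ⟨hf, fun e he => mem_closure_of_not_coloop hf.subset_ground he (hc e he)⟩,
   fun ⟨hf, hc⟩ => ⟨hf, fun e he => not_coloop_of_mem_closure hf.subset_ground he (hc e he)⟩⟩

lemma rk_eq_ncard_basis {M : Matroid α} (hE : M.E.Finite) {I X : Set α} (hB : M.IsBasis I X) :
    rk M X = I.ncard := by
  have hfin : ∀ J : Set α, M.Indep J → J.Finite := fun J hJ => hE.subset hJ.subset_ground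
  have h1 : I.ncard ∈ {n : ℕ | ∃ J, M.Indep J ∧ J ⊆ X ∧ J.ncard = n} :=
    ⟨I, hB.indep, hB.subset, rfl⟩
  have hub : ∀ n ∈ {n : ℕ | ∃ J, M.Indep J ∧ J ⊆ X ∧ J.ncard = n}, n ≤ I.ncard := by
    rintro n ⟨J, hJ, hJX, rfl⟩
    obtain ⟨B', hB', hJB'⟩ := hJ.subset_isBasis_of_subset hJX hB.subset_ground
    have hcard : B'.encard = I.encard := hB'.encard_eq_encard hB
    have h3 : J.ncard ≤ B'.ncard := ncard_le_ncard hJB' (hfin B' hB'.indep)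
    have h4 : B'.ncard = I.ncard := by
      rw [Set.ncard_def, Set.ncard_def, hcard]
    omega
  exact le_antisymm (csSup_le ⟨_, h1⟩ hub) (le_csSup ⟨I.ncard, hub⟩ h1)

lemma one_le_rk_flat {M : Matroid α} (hE : M.E.Finite) (hL : Loopless M) {F : Set α}
    (hF : M.IsFlat F) (hne : F.Nonempty) : 1 ≤ rk M F := by
  obtain ⟨e, he⟩ := hne
  obtain ⟨B, hB⟩ := M.exists_isBasis F hF.subset_ground
  rw [rk_eq_ncard_basis hE hB]
  rcases B.eq_empty_or_nonempty with hB0 | hB1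
  · exfalso
    subst hB0
    have h1 : e ∈ M.closure ∅ := hB.subset_closure he
    have h2 := M.empty_indep.mem_closure_iff.1 h1
    simp only [insert_empty_eq, mem_empty_iff_false, or_false] at h2
    exact h2.1 (hL e (hF.subset_ground he))
  · exact (Set.ncard_pos (hE.subset hB.indep.subset_ground)).2 hB1

section FreeConeLemmas

variable {M Q : Matroid α} {T : α → Set α} {a : α} {m : ℕ}

lemma QE_finite (hFC : FreeCone M Q T a m) : Q.E.Finite := by
  rw [hFC.hQE]
  exact ((hFC.hMfin.union (Set.Finite.biUnion hFC.hMfin hFC.hTfin)).union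
    (finite_singleton a))

lemma loops_empty (hFC : FreeCone M Q T a m) : Q.closure ∅ = ∅ := by
  set Z0 := Q.closure ∅ with hZ0
  have hcf : CyclicFlat Q Z0 := by
    refine cyclicFlat_iff'.2 ⟨flat_closure_s18 Q ∅, fun e he => ?_⟩
    exact Q.closure_subset_closure (empty_subset _) he
  have hrk0 : rk Q Z0 = 0 := by
    obtain ⟨I, hI⟩ := Q.exists_isBasis Z0 (Q.closure_subset_ground ∅)
    have hIe : I = ∅ := by
      rcases I.eq_empty_or_nonempty with h0 | ⟨x, hx⟩
      · exact h0
      · exfalso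
        have hxZ : x ∈ Z0 := hI.subset hx
        have h2 := Q.empty_indep.mem_closure_iff.1 hxZ
        simp only [insert_empty_eq, mem_empty_iff_false, or_false] at h2
        exact h2.1 (hI.indep.subset (singleton_subset_iff.2 hx))
    rw [rk_eq_ncard_basis (QE_finite hFC) hI, hIe, Set.ncard_empty]
  rcases (hFC.hcyclic Z0).1 hcf with hMZ | ⟨F', hF', hne, hEq⟩
  · rcases Z0.eq_empty_or_nonempty with h0 | h1
    · exact h0
    · exfalso
      have h2 := one_le_rk_flat hFC.hMfin hFC.hloopless hMZ.1 h1
      have h3 := hFC.hrank1 Z0 hMZ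
      omega
  · exfalso
    have h2 := hFC.hrank2 F' hF' hne
    rw [← hEq, hrk0] at h2
    omega

lemma indep_singleton' (hFC : FreeCone M Q T a m) {x : α} (hx : x ∈ Q.E) :
    Q.Indep {x} := by
  by_contra h
  have h1 : x ∈ Q.closure ∅ := by
    refine Q.empty_indep.mem_closure_iff.2 (Or.inl ?_)
    rw [insert_empty_eq, dep_iff]
    exact ⟨h, singleton_subset_iff.2 hx⟩
  rw [loops_empty hFC] at h1
  exact h1

lemma pair_indep (hFC : FreeCone M Q T a m) {x y : α} (hx : x ∈ Q.E) (hy : y ∈ Q.E)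
    (hxy : x ≠ y) (hyM : y ∉ M.E) : Q.Indep {x, y} := by
  by_contra h
  have hx1 : Q.Indep {x} := indep_singleton' hFC hx
  have hy1 : Q.Indep {y} := indep_singleton' hFC hy
  have hyx : y ∈ Q.closure {x} := by
    refine hx1.mem_closure_iff.2 (Or.inl ?_)
    rw [dep_iff]
    constructor
    · intro hI
      exact h (by rwa [Set.pair_comm y x] at hI)
    · exact insert_subset hy (singleton_subset_iff.2 hx)
  have hxy' : x ∈ Q.closure {y} := by
    refine hy1.mem_closure_iff.2 (Or.inl ?_)
    rw [dep_iff]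
    exact ⟨fun hI => h hI, insert_subset hx (singleton_subset_iff.2 hy)⟩
  set Z1 := Q.closure {x} with hZ1
  have hxZ : x ∈ Z1 := Q.subset_closure {x} (singleton_subset_iff.2 hx) rfl
  have hcf : CyclicFlat Q Z1 := by
    refine cyclicFlat_iff'.2 ⟨flat_closure_s18 Q {x}, fun e he => ?_⟩
    by_cases hex : e = x
    · subst hex
      have hyZ : y ∈ Z1 \ {e} := ⟨hyx, fun hc => hxy (hc.symm)⟩
      exact (Q.closure_subset_closure (singleton_subset_iff.2 hyZ)) hxy'
    · have hxZ' : ({x} : Set α) ⊆ Z1 \ {e} :=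
        singleton_subset_iff.2 ⟨hxZ, fun hc => hex (by simpa using hc.symm)⟩
      exact (Q.closure_subset_closure hxZ') he
  have hrk1 : rk Q Z1 = 1 := by
    rw [rk_eq_ncard_basis (QE_finite hFC) hx1.isBasis_closure, Set.ncard_singleton]
  rcases (hFC.hcyclic Z1).1 hcf with hMZ | ⟨F', hF', hne, hEq⟩
  · exact hyM (hMZ.1.subset_ground hyx)
  · have h2 := hFC.hrank2 F' hF' hne
    have h3 := one_le_rk_flat hFC.hMfin hFC.hloopless hF' hne
    rw [← hEq, hrk1] at h2
    omega

lemma line_span (hFC : FreeCone M Q T a m) {f x y : α} (hf : f ∈ M.E)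
    (hx : x = f ∨ x ∈ T f) (hy : y = f ∨ y ∈ T f) (hxy : x ≠ y)
    (hind : Q.Indep {x, y}) : cone T a (M.closure {f}) ⊆ Q.closure {x, y} := by
  set L := M.closure {f} with hL
  have hLflat : M.IsFlat L := flat_closure_s18 M {f}
  have hfL : f ∈ L := M.subset_closure {f} (singleton_subset_iff.2 hf) rfl
  have hrkL : rk M L = 1 := by
    rw [rk_eq_ncard_basis hFC.hMfin (hFC.hloopless f hf).isBasis_closure, Set.ncard_singleton]
  have hcone : CyclicFlat Q (cone T a L) :=
    (hFC.hcyclic _).2 (Or.inr ⟨L, hLflat, ⟨f, hfL⟩, rfl⟩)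
  have hconeE : cone T a L ⊆ Q.E := hcone.1.subset_ground
  have hrkC : rk Q (cone T a L) = 2 := by
    rw [hFC.hrank2 L hLflat ⟨f, hfL⟩, hrkL]
  have hxC : x ∈ cone T a L := by
    rcases hx with rfl | hxT
    · exact Or.inl (Or.inl hfL)
    · exact Or.inr (mem_biUnion hfL hxT)
  have hyC : y ∈ cone T a L := by
    rcases hy with rfl | hyT
    · exact Or.inl (Or.inl hfL)
    · exact Or.inr (mem_biUnion hfL hyT)
  have hsub : ({x, y} : Set α) ⊆ cone T a L := insert_subset hxC (singleton_subset_iff.2 hyC)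
  obtain ⟨B, hB, hxyB⟩ := hind.subset_isBasis_of_subset hsub hconeE
  have hBcard : B.ncard = 2 := by
    rw [← rk_eq_ncard_basis (QE_finite hFC) hB, hrkC]
  have hBfin : B.Finite := (QE_finite hFC).subset hB.indep.subset_ground
  have hBeq : ({x, y} : Set α) = B :=
    Set.eq_of_subset_of_ncard_le hxyB (by rw [hBcard, Set.ncard_pair hxy]) hBfin
  rw [hBeq]
  exact hB.subset_closure

end FreeConeLemmas

/-- For `m > 1`, the cyclic flats of `Q \ {a}` are the cyclic flats of `M`
together with the sets `q(F) \ {a}` for nonempty flats `F` of `M`. -/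
theorem cyclic_flats_of_tipless_cone {M Q : Matroid α} {T : α → Set α} {a : α} {m : ℕ}
    (hFC : FreeCone M Q T a m) (hm : 1 < m) :
    ∀ F, CyclicFlat (mdel Q {a}) F ↔
      (CyclicFlat M F ∨ ∃ F', M.IsFlat F' ∧ F'.Nonempty ∧ F = cone T a F' \ {a}) := by
  have haM : a ∉ M.E := fun h => hFC.ha (Or.inl h)
  have haT : a ∉ ⋃ e ∈ M.E, T e := fun h => hFC.ha (Or.inr h)
  have hmdel : mdel Q {a} = Q ↾ (Q.E \ {a}) := rfl
  have hRE : Q.E \ {a} ⊆ Q.E := diff_subset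
  intro Z
  constructor
  · rintro ⟨hZflat, hZcol⟩
    have hZR : Z ⊆ Q.E \ {a} := by
      have := hZflat.subset_ground
      rwa [hmdel, restrict_ground_eq] at this
    have hZE : Z ⊆ Q.E := hZR.trans diff_subset
    set W := Q.closure Z with hW
    have hWE : W ⊆ Q.E := Q.closure_subset_ground Z
    have hWcap : W ∩ (Q.E \ {a}) = Z := by
      have h1 := hZflat.closure
      rwa [hmdel, restrict_closure' Q hZR diff_subset] at h1
    have hWZ : W \ {a} = Z := by
      rw [← hWcap]
      ext z
      constructor
      · rintro ⟨h1, h2⟩; exact ⟨h1, hWE h1, h2⟩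
      · rintro ⟨h1, h2⟩; exact ⟨h1, h2.2⟩
    have hZW : Z ⊆ W := Q.subset_closure Z hZE
    have hcfW : CyclicFlat Q W := by
      refine cyclicFlat_iff'.2 ⟨flat_closure_s18 Q Z, fun e heW => ?_⟩
      by_cases hea : e = a
      · rw [hea] at heW ⊢
        have hsub : Z ⊆ W \ {a} := hWZ.symm.subset
        exact (Q.closure_subset_closure hsub) heW
      · have heZ : e ∈ Z := by rw [← hWZ]; exact ⟨heW, hea⟩
        have hnc : ¬ IsColoop (Q ↾ Z) e := by
          have h2 := hZcol e heZ
          rwa [hmdel, Q.restrict_restrict_eq hZR] at h2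
        have h3 := mem_closure_of_not_coloop hZE heZ hnc
        exact Q.closure_subset_closure (diff_subset_diff_left hZW) h3
    rcases (hFC.hcyclic W).1 hcfW with hMW | ⟨F', hF', hne, hWeq⟩
    · left
      have haW : a ∉ W := fun h => haM (hMW.1.subset_ground h)
      have : Z = W := by rw [← hWZ, diff_singleton_eq_self haW]
      rwa [this]
    · right
      exact ⟨F', hF', hne, by rw [← hWZ, hWeq]⟩
  · rintro (hMZ | ⟨F', hF', hne, rfl⟩)
    · have hQZ : CyclicFlat Q Z := (hFC.hcyclic Z).2 (Or.inl hMZ)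
      have hZME : Z ⊆ M.E := hMZ.1.subset_ground
      have hZR : Z ⊆ Q.E \ {a} := by
        intro z hz
        refine ⟨hQZ.1.subset_ground hz, ?_⟩
        intro hc
        rw [mem_singleton_iff] at hc
        subst hc
        exact haM (hZME hz)
      constructor
      · have h1 : (Q ↾ (Q.E \ {a})).closure Z = Z := by
          rw [restrict_closure' Q hZR diff_subset, hQZ.1.closure,
            inter_eq_self_of_subset_left hZR]
        rw [hmdel]
        exact h1 ▸ flat_closure_s18 (Q ↾ (Q.E \ {a})) Z
      · intro e heZ
        rw [hmdel, Q.restrict_restrict_eq hZR]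
        exact hQZ.2 e heZ
    · set C := cone T a F' with hC
      have hQC : CyclicFlat Q C := (hFC.hcyclic C).2 (Or.inr ⟨F', hF', hne, rfl⟩)
      have hCE : C ⊆ Q.E := hQC.1.subset_ground
      have haC : a ∈ C := Or.inl (Or.inr rfl)
      have haMem : a ∈ Q.closure (C \ {a}) := mem_closure_of_not_coloop hCE haC (hQC.2 a haC)
      have hclC : Q.closure (C \ {a}) = C := by
        apply subset_antisymm
        · calc Q.closure (C \ {a}) ⊆ Q.closure C := Q.closure_subset_closure diff_subset
            _ = C := hQC.1.closure
        · intro z hzC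
          by_cases hza : z = a
          · subst hza; exact haMem
          · exact Q.subset_closure (C \ {a}) (diff_subset.trans hCE) ⟨hzC, hza⟩
      have key : ∀ e ∈ C \ {a}, e ∈ Q.closure ((C \ {a}) \ {e}) := by
        rintro e ⟨heC, hea⟩
        have hea' : e ≠ a := hea
        rcases heC with (heF' | heaa) | heT
        · -- e ∈ F'
          have heM : e ∈ M.E := hF'.subset_ground heF'
          have hT2 : 1 < (T e).ncard := by rw [hFC.hTcard e heM]; exact hm
          obtain ⟨t, ht, t', ht', htt'⟩ := (Set.one_lt_ncard (hFC.hTfin e heM)).1 hT2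
          have htE : t ∈ Q.E := by
            rw [hFC.hQE]; exact Or.inl (Or.inr (mem_biUnion heM ht))
          have ht'E : t' ∈ Q.E := by
            rw [hFC.hQE]; exact Or.inl (Or.inr (mem_biUnion heM ht'))
          have htM : t ∉ M.E := Set.disjoint_left.1 (hFC.hTdisjE e heM) ht
          have ht'M : t' ∉ M.E := Set.disjoint_left.1 (hFC.hTdisjE e heM) ht'
          have hind : Q.Indep {t, t'} := pair_indep hFC htE ht'E htt' ht'M
          have hspan := line_span hFC heM (Or.inr ht) (Or.inr ht') htt' hind
          have heIn : e ∈ cone T a (M.closure {e}) :=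
            Or.inl (Or.inl (M.subset_closure {e} (singleton_subset_iff.2 heM) rfl))
          have hta : t ≠ a := fun hc => haT (mem_biUnion heM (hc ▸ ht))
          have ht'a : t' ≠ a := fun hc => haT (mem_biUnion heM (hc ▸ ht'))
          have hte : t ≠ e := fun hc => htM (hc ▸ heM)
          have ht'e : t' ≠ e := fun hc => ht'M (hc ▸ heM)
          have hsub2 : ({t, t'} : Set α) ⊆ (C \ {a}) \ {e} := by
            refine insert_subset ⟨⟨?_, hta⟩, hte⟩ (singleton_subset_iff.2 ⟨⟨?_, ht'a⟩, ht'e⟩)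
            · exact Or.inr (mem_biUnion heF' ht)
            · exact Or.inr (mem_biUnion heF' ht')
          exact (Q.closure_subset_closure hsub2) (hspan heIn)
        · exact absurd heaa hea'
        · -- e ∈ ⋃ g ∈ F', T g
          obtain ⟨g, hgF', heTg⟩ := mem_iUnion₂.1 heT
          have hgM : g ∈ M.E := hF'.subset_ground hgF'
          have heM' : e ∉ M.E := Set.disjoint_left.1 (hFC.hTdisjE g hgM) heTg
          have hT2 : 1 < (T g).ncard := by rw [hFC.hTcard g hgM]; exact hm
          obtain ⟨t', ht', ht'e⟩ := Set.exists_ne_of_one_lt_ncard hT2 e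
          have ht'E : t' ∈ Q.E := by
            rw [hFC.hQE]; exact Or.inl (Or.inr (mem_biUnion hgM ht'))
          have hgE : g ∈ Q.E := by rw [hFC.hQE]; exact Or.inl (Or.inl hgM)
          have ht'M : t' ∉ M.E := Set.disjoint_left.1 (hFC.hTdisjE g hgM) ht'
          have hgt' : g ≠ t' := fun hc => ht'M (hc ▸ hgM)
          have hind : Q.Indep {g, t'} := pair_indep hFC hgE ht'E hgt' ht'M
          have hspan := line_span hFC hgM (Or.inl rfl) (Or.inr ht') hgt' hind
          have heIn : e ∈ cone T a (M.closure {g}) :=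
            Or.inr (mem_biUnion (M.subset_closure {g} (singleton_subset_iff.2 hgM) rfl) heTg)
          have hga : g ≠ a := fun hc => haM (hc ▸ hgM)
          have ht'a : t' ≠ a := fun hc => haT (mem_biUnion hgM (hc ▸ ht'))
          have hge : g ≠ e := fun hc => heM' (hc ▸ hgM)
          have hsub2 : ({g, t'} : Set α) ⊆ (C \ {a}) \ {e} := by
            refine insert_subset ⟨⟨Or.inl (Or.inl hgF'), hga⟩, hge⟩
              (singleton_subset_iff.2 ⟨⟨Or.inr (mem_biUnion hgF' ht'), ht'a⟩, ht'e⟩)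
          exact (Q.closure_subset_closure hsub2) (hspan heIn)
      have hCR : C \ {a} ⊆ Q.E \ {a} := diff_subset_diff_left hCE
      constructor
      · have h1 : (Q ↾ (Q.E \ {a})).closure (C \ {a}) = C \ {a} := by
          rw [restrict_closure' Q hCR diff_subset, hclC]
          ext z
          constructor
          · rintro ⟨h1, h2⟩; exact ⟨h1, h2.2⟩
          · rintro ⟨h1, h2⟩; exact ⟨h1, hCE h1, h2⟩
        rw [hmdel]
        exact h1 ▸ flat_closure_s18 (Q ↾ (Q.E \ {a})) (C \ {a})
      · intro e he
        rw [hmdel, Q.restrict_restrict_eq hCR]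
        exact not_coloop_of_mem_closure (diff_subset.trans hCE) he (key e he)
end ConePaper
end
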